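/- arXiv:math/0701834 — 2 statements merged into one kernel-verified Lean document; each statement's English description precedes it below -/
import Mathlib

section
/- Let (φ_t)_{t≥0} be a continuous semigroup of holomorphic self-maps of the unit disc 𝔻 with infinitesimal generator G, let τ ∈ ∂𝔻 be a boundary regular fixed point for (φ_t) with boundary dilatation coefficients (e^{λt}), and let μ be the finite positive measure on ∂𝔻 such that (μ_{t,τ} − δ_τ)/t → −λδ_τ + μ weak-star as t → 0⁺. Then for every continuous function f : ∂𝔻 → ℝ, ∫_{∂𝔻} f(ζ) dμ(ζ) = lim_{r→1} ∫_{∂𝔻} f(ζ)·( 2 Re( G(rζ)·τ/(τ−rζ)² ) + λ Re( (τ+rζ)/(τ−rζ) ) ) dm(ζ). -/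
open Complex MeasureTheory Filter Topology Set
open scoped ENNReal NNReal

noncomputable section

/-- The open unit disc `𝔻 = {z ∈ ℂ : |z| < 1}`. -/
def unitDisc : Set ℂ := {z : ℂ | ‖z‖ < 1}

/-- The Poisson kernel `P(ζ, z) = (1 - |z|²)/|z - ζ|²`. -/
def unitDiscPoissonKernel (ζ z : ℂ) : ℝ := (1 - ‖z‖ ^ 2) / ‖z - ζ‖ ^ 2

/-- `f` is a holomorphic self-map of the unit disc. -/
def IsHolSelfMap (f : ℂ → ℂ) : Prop :=
  DifferentiableOn ℂ f unitDisc ∧ MapsTo f unitDisc unitDisc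

/-- `μ` is the Aleksandrov–Clark measure of `f` at `τ`: a finite positive Borel measure
concentrated on the unit circle such that
`Re((τ + f z)/(τ - f z)) = ∫ P(ζ, z) dμ(ζ)` for all `z ∈ 𝔻`. -/
def IsClarkMeasure (f : ℂ → ℂ) (τ : ℂ) (μ : Measure ℂ) : Prop :=
  IsFiniteMeasure μ ∧ μ {z : ℂ | ‖z‖ ≠ 1} = 0 ∧
    ∀ z ∈ unitDisc, ((τ + f z) / (τ - f z)).re = ∫ ζ, unitDiscPoissonKernel ζ z ∂μ

/-- A continuous semigroup `(φ_t)_{t ≥ 0}` of holomorphic self-maps of the unit disc. -/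
def IsCtsSemigroup (φ : ℝ → ℂ → ℂ) : Prop :=
  (∀ t : ℝ, 0 ≤ t → IsHolSelfMap (φ t)) ∧
  (∀ z ∈ unitDisc, φ 0 z = z) ∧
  (∀ s t : ℝ, 0 ≤ s → 0 ≤ t → ∀ z ∈ unitDisc, φ (s + t) z = φ s (φ t z)) ∧
  ContinuousOn (fun p : ℝ × ℂ => φ p.1 p.2) (Ici (0 : ℝ) ×ˢ unitDisc)

/-- `G` is the infinitesimal generator of the semigroup `(φ_t)`:
`∂φ_t(z)/∂t = G(φ_t(z))` for all `z ∈ 𝔻`, `t ≥ 0`. -/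
def IsInfGenerator (φ : ℝ → ℂ → ℂ) (G : ℂ → ℂ) : Prop :=
  DifferentiableOn ℂ G unitDisc ∧
  ∀ z ∈ unitDisc, ∀ t : ℝ, 0 ≤ t → HasDerivAt (fun s : ℝ => φ s z) (G (φ t z)) t

/-- Stolz angle at `ζ` with opening `M`. -/
def stolzAngle (ζ : ℂ) (M : ℝ) : Set ℂ :=
  {z : ℂ | ‖z‖ < 1 ∧ ‖ζ - z‖ ≤ M * (1 - ‖z‖)}

/-- Nontangential (angular) limit: `g(z) → L` as `z → ζ` within every Stolz angle. -/
def NTLimit (g : ℂ → ℂ) (ζ L : ℂ) : Prop :=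
  ∀ M : ℝ, 1 ≤ M → Tendsto g (𝓝[stolzAngle ζ M] ζ) (𝓝 L)

/-- Radial limit `f*(ζ) = lim_{r → 1⁻} f(rζ) = L`. -/
def RadialLimit (f : ℂ → ℂ) (ζ L : ℂ) : Prop :=
  Tendsto (fun r : ℝ => f ((r : ℂ) * ζ)) (𝓝[<] (1 : ℝ)) (𝓝 L)

/-- `τ` is a boundary regular fixed point of `f` with (finite) angular derivative `d`. -/
def IsBRFP (f : ℂ → ℂ) (τ d : ℂ) : Prop :=
  RadialLimit f τ τ ∧ NTLimit (fun z => (f z - τ) / (z - τ)) τ d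

/-- `τ` is a boundary regular fixed point of the semigroup `(φ_t)` with boundary dilatation
coefficients `(e^{λ t})`. -/
def HasBRFPWithCoeffs (φ : ℝ → ℂ → ℂ) (τ : ℂ) (lam : ℝ) : Prop :=
  ∀ t : ℝ, 0 ≤ t → IsBRFP (φ t) τ (Real.exp (lam * t))

/-- Normalized arclength (Lebesgue) measure `m` on the unit circle, viewed as a measure on `ℂ`,
with `m(∂𝔻) = 1`. -/
def circleLebesgue : Measure ℂ :=
  ENNReal.ofReal (2 * Real.pi)⁻¹ •
    Measure.map (fun θ : ℝ => Complex.exp (θ * Complex.I))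
      (volume.restrict (Ioc (0 : ℝ) (2 * Real.pi)))

end


set_option maxHeartbeats 1000000

noncomputable section Helpers

lemma circleMap_meas : Measurable (fun θ : ℝ => Complex.exp (θ * Complex.I)) := by
  fun_prop

lemma circleLebesgue_off_circle : circleLebesgue {z : ℂ | ‖z‖ ≠ 1} = 0 := by
  have hmeas : MeasurableSet {z : ℂ | ‖z‖ ≠ 1} :=
    ((continuous_norm.measurable (measurableSet_singleton 1)).compl)
  rw [circleLebesgue, Measure.smul_apply,
    Measure.map_apply circleMap_meas hmeas]
  have : (fun θ : ℝ => Complex.exp (θ * Complex.I)) ⁻¹' {z : ℂ | ‖z‖ ≠ 1} = ∅ := by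
    ext θ; simp [Complex.norm_exp_ofReal_mul_I]
  simp [this]

lemma circleLebesgue_ae_circle : ∀ᵐ ζ ∂circleLebesgue, ‖ζ‖ = 1 := by
  rw [ae_iff]
  simpa using circleLebesgue_off_circle

instance : IsProbabilityMeasure circleLebesgue := by
  constructor
  rw [circleLebesgue, Measure.smul_apply, Measure.map_apply circleMap_meas MeasurableSet.univ]
  simp only [Set.preimage_univ, Measure.restrict_apply MeasurableSet.univ, Set.univ_inter,
    Real.volume_Ioc, smul_eq_mul]
  rw [← ENNReal.ofReal_mul (by positivity), sub_zero,
    inv_mul_cancel₀ (by positivity), ENNReal.ofReal_one]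

lemma integral_circleLebesgue (g : ℂ → ℝ) (hg : Measurable g) :
    ∫ ζ, g ζ ∂circleLebesgue
      = (2 * Real.pi)⁻¹ * ∫ θ in Ioc (0:ℝ) (2 * Real.pi), g (Complex.exp (θ * Complex.I)) := by
  rw [circleLebesgue, integral_smul_measure,
    integral_map circleMap_meas.aemeasurable hg.aestronglyMeasurable]
  rw [ENNReal.toReal_ofReal (by positivity)]
  simp [smul_eq_mul]

lemma poisson_re (ζ z : ℂ) (hζ : ‖ζ‖ = 1) :
    ((ζ + z) / (ζ - z)).re = unitDiscPoissonKernel ζ z := by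
  have h1 : Complex.normSq ζ = 1 := by
    rw [← Complex.sq_norm, hζ]; norm_num
  rw [Complex.div_re, unitDiscPoissonKernel, Complex.sq_norm z, Complex.sq_norm (z - ζ)]
  rw [Complex.normSq_apply, Complex.normSq_apply, Complex.normSq_apply] at *
  simp only [Complex.add_re, Complex.add_im, Complex.sub_re, Complex.sub_im]
  rw [← add_div]
  have hd : (ζ.re - z.re) * (ζ.re - z.re) + (ζ.im - z.im) * (ζ.im - z.im)
      = (z.re - ζ.re) * (z.re - ζ.re) + (z.im - ζ.im) * (z.im - ζ.im) := by ring
  rw [hd]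
  congr 1
  nlinarith [h1]

lemma poisson_symm (ζ ξ : ℂ) (r : ℝ) (hζ : ‖ζ‖ = 1) (hξ : ‖ξ‖ = 1) :
    unitDiscPoissonKernel ξ ((r : ℂ) * ζ) = unitDiscPoissonKernel ζ ((r : ℂ) * ξ) := by
  have h1 : Complex.normSq ζ = 1 := by rw [← Complex.sq_norm, hζ]; norm_num
  have h2 : Complex.normSq ξ = 1 := by rw [← Complex.sq_norm, hξ]; norm_num
  rw [Complex.normSq_apply] at h1 h2
  unfold unitDiscPoissonKernel
  rw [Complex.sq_norm, Complex.sq_norm, Complex.sq_norm, Complex.sq_norm]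
  simp only [Complex.normSq_apply, Complex.mul_re, Complex.mul_im, Complex.sub_re,
    Complex.sub_im, Complex.ofReal_re, Complex.ofReal_im]
  congr 1
  · first
    | linear_combination (r^2) * h2 - (r^2) * h1
    | linear_combination (r^2) * h1 - (r^2) * h2
  · first
    | linear_combination (r^2 - 1) * h1 - (r^2 - 1) * h2
    | linear_combination (r^2 - 1) * h2 - (r^2 - 1) * h1

lemma poisson_nonneg (ζ z : ℂ) (hz : ‖z‖ < 1) : 0 ≤ unitDiscPoissonKernel ζ z := by
  apply div_nonneg
  · nlinarith [norm_nonneg z]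
  · positivity

lemma abs_sub_lower (ζ z : ℂ) (hζ : ‖ζ‖ = 1) :
    1 - ‖z‖ ≤ ‖z - ζ‖ := by
  have h := norm_sub_norm_le ζ z
  rw [hζ] at h
  calc 1 - ‖z‖ ≤ ‖ζ - z‖ := by exact h
    _ = ‖z - ζ‖ := by rw [← neg_sub, norm_neg]

lemma poisson_le (ζ z : ℂ) (hζ : ‖ζ‖ = 1) (hz : ‖z‖ < 1) :
    unitDiscPoissonKernel ζ z ≤ (1 - ‖z‖ ^ 2) / (1 - ‖z‖) ^ 2 := by
  have h0 : 0 < 1 - ‖z‖ := by linarith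
  have hl := abs_sub_lower ζ z hζ
  apply div_le_div_of_nonneg_left
  · nlinarith [norm_nonneg z]
  · positivity
  · nlinarith

lemma poisson_le_far (ζ z : ℂ) (c : ℝ) (hc : 0 < c) (hfar : c ≤ ‖z - ζ‖)
    (hz : ‖z‖ < 1) :
    unitDiscPoissonKernel ζ z ≤ (1 - ‖z‖ ^ 2) / c ^ 2 := by
  apply div_le_div_of_nonneg_left
  · nlinarith [norm_nonneg z]
  · positivity
  · nlinarith

lemma exp_ne_z {z : ℂ} (hz : ‖z‖ < 1) (θ : ℝ) :
    Complex.exp (θ * Complex.I) - z ≠ 0 := by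
  intro h
  have : Complex.exp (θ * Complex.I) = z := by linear_combination h
  rw [← this, Complex.norm_exp_ofReal_mul_I] at hz
  exact lt_irrefl 1 hz

lemma circle_mean (z : ℂ) (hz : ‖z‖ < 1) :
    ∫ θ in (0:ℝ)..(2 * Real.pi),
      ((Complex.exp (θ * Complex.I) + z) / (Complex.exp (θ * Complex.I) - z))
      = (2 * Real.pi : ℂ) := by
  have h0 : (0:ℂ) ∈ Metric.ball (0:ℂ) 1 := by simp
  have hzb : z ∈ Metric.ball (0:ℂ) 1 := by
    simp [Metric.mem_ball, Complex.dist_eq, hz]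
  have hint0 : CircleIntegrable (fun ξ : ℂ => (ξ - 0)⁻¹) 0 1 := by
    rw [circleIntegrable_sub_inv_iff]; right; simp
  have hintz : CircleIntegrable (fun ξ : ℂ => (ξ - z)⁻¹) 0 1 := by
    rw [circleIntegrable_sub_inv_iff]; right
    simp [Metric.mem_sphere, Complex.dist_eq]
    intro h; rw [h] at hz; simp at hz
  have hint0' : CircleIntegrable (fun ξ : ℂ => Complex.I • (ξ - 0)⁻¹) 0 1 :=
    hint0.smul Complex.I
  have hintz' : CircleIntegrable (fun ξ : ℂ => (2 * Complex.I) • (ξ - z)⁻¹) 0 1 :=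
    hintz.smul (2 * Complex.I)
  have e1 : (∮ ξ in C(0, 1), Complex.I • (ξ - 0)⁻¹) = Complex.I • (2 * Real.pi * Complex.I) := by
    rw [circleIntegral.integral_smul Complex.I (fun ξ : ℂ => (ξ - 0)⁻¹) 0 1,
      circleIntegral.integral_sub_inv_of_mem_ball h0]
  have e2 : (∮ ξ in C(0, 1), (2 * Complex.I) • (ξ - z)⁻¹)
      = (2 * Complex.I) • (2 * Real.pi * Complex.I) := by
    rw [circleIntegral.integral_smul (2 * Complex.I) (fun ξ : ℂ => (ξ - z)⁻¹) 0 1,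
      circleIntegral.integral_sub_inv_of_mem_ball hzb]
  have key : (∮ ξ in C(0, 1), (Complex.I • (ξ - 0)⁻¹ - (2 * Complex.I) • (ξ - z)⁻¹))
      = Complex.I * (2 * Real.pi * Complex.I) - 2 * Complex.I * (2 * Real.pi * Complex.I) := by
    rw [circleIntegral.integral_sub hint0' hintz', e1, e2]
    simp [smul_eq_mul]
  have expand : (∮ ξ in C(0, 1), (Complex.I • (ξ - 0)⁻¹ - (2 * Complex.I) • (ξ - z)⁻¹))
      = ∫ θ in (0:ℝ)..(2 * Real.pi),
        ((Complex.exp (θ * Complex.I) + z) / (Complex.exp (θ * Complex.I) - z)) := by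
    rw [circleIntegral]
    apply intervalIntegral.integral_congr
    intro θ _
    have hne := exp_ne_z hz θ
    have hne0 : Complex.exp (θ * Complex.I) ≠ 0 := Complex.exp_ne_zero _
    simp only [deriv_circleMap, circleMap, Complex.ofReal_one, zero_add, one_mul, smul_eq_mul]
    field_simp
    linear_combination (-(Complex.exp (θ * Complex.I)) * (Complex.exp (θ * Complex.I) + z)) *
      Complex.I_sq
  rw [← expand, key]
  have : (Complex.I : ℂ) * Complex.I = -1 := Complex.I_mul_I
  ring_nf
  rw [Complex.I_sq]
  ring

lemma poisson_measurable (z : ℂ) : Measurable (fun ζ => unitDiscPoissonKernel ζ z) := by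
  unfold unitDiscPoissonKernel
  exact Measurable.div measurable_const
    ((continuous_norm.measurable.comp (measurable_const.sub measurable_id)).pow_const 2)

lemma poisson_mean (z : ℂ) (hz : ‖z‖ < 1) :
    ∫ ζ, unitDiscPoissonKernel ζ z ∂circleLebesgue = 1 := by
  rw [integral_circleLebesgue _ (poisson_measurable z)]
  have hcont : Continuous (fun θ : ℝ =>
      (Complex.exp (θ * Complex.I) + z) / (Complex.exp (θ * Complex.I) - z)) := by
    apply Continuous.div
    · fun_prop
    · fun_prop
    · intro θ; exact exp_ne_z hz θ
  have hint : IntegrableOn (fun θ : ℝ =>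
      (Complex.exp (θ * Complex.I) + z) / (Complex.exp (θ * Complex.I) - z))
      (Ioc (0:ℝ) (2 * Real.pi)) MeasureTheory.volume := hcont.integrableOn_Ioc
  have e1 : ∫ θ in Ioc (0:ℝ) (2 * Real.pi), unitDiscPoissonKernel (Complex.exp (θ * Complex.I)) z
      = ∫ θ in Ioc (0:ℝ) (2 * Real.pi),
        ((Complex.exp (θ * Complex.I) + z) / (Complex.exp (θ * Complex.I) - z)).re := by
    apply setIntegral_congr_fun measurableSet_Ioc
    intro θ _
    exact (poisson_re _ z (Complex.norm_exp_ofReal_mul_I θ)).symm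
  have e3 : ∫ θ in Ioc (0:ℝ) (2 * Real.pi),
      ((Complex.exp (θ * Complex.I) + z) / (Complex.exp (θ * Complex.I) - z)).re
      = (∫ θ in Ioc (0:ℝ) (2 * Real.pi),
        ((Complex.exp (θ * Complex.I) + z) / (Complex.exp (θ * Complex.I) - z))).re := by
    simpa using Complex.reCLM.integral_comp_comm hint
  rw [e1, e3]
  have e2 : ∫ θ in Ioc (0:ℝ) (2 * Real.pi),
      ((Complex.exp (θ * Complex.I) + z) / (Complex.exp (θ * Complex.I) - z))
      = (2 * Real.pi : ℂ) := by
    rw [← intervalIntegral.integral_of_le (by positivity)]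
    exact circle_mean z hz
  rw [e2]
  rw [show ((2 * Real.pi : ℂ)).re = 2 * Real.pi by norm_num]
  rw [inv_mul_cancel₀ (by positivity)]

lemma integrable_on_circle (g : ℂ → ℝ) (hg : Measurable g) (C : ℝ)
    (hb : ∀ ζ, ‖ζ‖ = 1 → ‖g ζ‖ ≤ C) : Integrable g circleLebesgue :=
  Integrable.mono' (integrable_const C) hg.aestronglyMeasurable
    (circleLebesgue_ae_circle.mono fun ζ h => hb ζ h)

lemma exists_circle_bound (f : ℂ → ℝ) (hf : Continuous f) :
    ∃ C : ℝ, 0 ≤ C ∧ ∀ ζ : ℂ, ‖ζ‖ = 1 → |f ζ| ≤ C := by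
  obtain ⟨C, hC⟩ := (isCompact_sphere (0:ℂ) 1).exists_bound_of_continuousOn hf.continuousOn
  refine ⟨max C 0, le_max_right _ _, fun ζ hζ => ?_⟩
  have hmem : ζ ∈ Metric.sphere (0:ℂ) 1 := by
    simp [Metric.mem_sphere, Complex.dist_eq, hζ]
  exact le_trans (hC ζ hmem) (le_max_left _ _)

lemma key_identity
    (φ : ℝ → ℂ → ℂ) (G : ℂ → ℂ) (hG : IsInfGenerator φ G)
    (hφ0 : ∀ z ∈ unitDisc, φ 0 z = z)
    (τ : ℂ) (hτ : ‖τ‖ = 1) (lam : ℝ)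
    (μtτ : ℝ → Measure ℂ)
    (hμt : ∀ t : ℝ, 0 ≤ t → IsClarkMeasure (φ t) τ (μtτ t))
    (μ : Measure ℂ)
    (hμcirc : μ {z : ℂ | ‖z‖ ≠ 1} = 0)
    (hμlim : ∀ f : ℂ → ℝ, Continuous f →
      Filter.Tendsto (fun t : ℝ => (1 / t) * ((∫ ζ, f ζ ∂(μtτ t)) - f τ))
        (𝓝[>] (0 : ℝ)) (𝓝 (-lam * f τ + ∫ ζ, f ζ ∂μ)))
    (z : ℂ) (hz : ‖z‖ < 1) :
    ∫ ξ, unitDiscPoissonKernel ξ z ∂μ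
      = 2 * (G z * τ / (τ - z) ^ 2).re + lam * ((τ + z) / (τ - z)).re := by
  have hzD : z ∈ unitDisc := hz
  have hτz : τ - z ≠ 0 := by
    intro h
    have : τ = z := by linear_combination h
    rw [this] at hτ; rw [hτ] at hz; exact lt_irrefl 1 hz
  set c : ℝ := ((1 - ‖z‖) / 2) ^ 2 with hc
  have hcpos : 0 < c := by
    have : 0 < 1 - ‖z‖ := by linarith
    positivity
  set gz : ℂ → ℝ := fun ζ => (1 - ‖z‖ ^ 2) / max (‖z - ζ‖ ^ 2) c
    with hgz
  have hgz_cont : Continuous gz := by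
    apply Continuous.div continuous_const
    · exact Continuous.max
        ((continuous_norm.comp (continuous_const.sub continuous_id)).pow 2)
        continuous_const
    · intro ζ
      exact ne_of_gt (lt_of_lt_of_le hcpos (le_max_right _ _))
  have heq : ∀ ζ : ℂ, ‖ζ‖ = 1 → gz ζ = unitDiscPoissonKernel ζ z := by
    intro ζ hζ
    have h1 : 1 - ‖z‖ ≤ ‖z - ζ‖ := abs_sub_lower ζ z hζ
    have h2 : c ≤ ‖z - ζ‖ ^ 2 := by
      rw [hc]
      have h3 : 0 < 1 - ‖z‖ := by linarith
      nlinarith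
    rw [hgz, unitDiscPoissonKernel]
    simp only
    rw [max_eq_left h2]
  have hgzτ : gz τ = ((τ + z) / (τ - z)).re := by
    rw [heq τ hτ, ← poisson_re τ z hτ]
  -- the function H
  set H : ℝ → ℝ := fun t => ((τ + φ t z) / (τ - φ t z)).re with hH
  have hH0 : H 0 = gz τ := by
    rw [hH]; simp only
    rw [hφ0 z hzD, hgzτ]
  -- derivative of H at 0
  have hu : HasDerivAt (fun s : ℝ => φ s z) (G z) 0 := by
    have := hG.2 z hzD 0 le_rfl
    rwa [hφ0 z hzD] at this
  have hq : HasDerivAt (fun w : ℂ => (τ + w) / (τ - w)) (2 * τ / (τ - z) ^ 2) z := by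
    have h1 : HasDerivAt (fun w : ℂ => τ + w) 1 z := by
      simpa using (hasDerivAt_id z).const_add τ
    have h2 : HasDerivAt (fun w : ℂ => τ - w) (-1) z := by
      simpa using (hasDerivAt_id z).const_sub τ
    have := h1.div h2 hτz
    refine this.congr_deriv (Eq.symm ?_)
    field_simp
    ring
  have hcomp : HasDerivAt (fun t : ℝ => (τ + φ t z) / (τ - φ t z))
      (G z • (2 * τ / (τ - z) ^ 2)) 0 := by
    have h0 : φ 0 z = z := hφ0 z hzD
    have hq' : HasDerivAt (fun w : ℂ => (τ + w) / (τ - w)) (2 * τ / (τ - z) ^ 2)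
        ((fun s : ℝ => φ s z) 0) := by rw [show (fun s : ℝ => φ s z) 0 = z from h0]; exact hq
    exact hq'.scomp 0 hu
  have hderiv : HasDerivAt H (2 * (G z * τ / (τ - z) ^ 2).re) 0 := by
    have := Complex.reCLM.hasFDerivAt.comp_hasDerivAt 0 hcomp
    refine this.congr_deriv (Eq.symm ?_)
    simp only [Complex.reCLM_apply, smul_eq_mul]
    rw [show G z * (2 * τ / (τ - z) ^ 2) = 2 * (G z * τ / (τ - z) ^ 2) by ring]
    simp [Complex.mul_re]
  -- slope convergence along 𝓝[>] 0
  have hslope : Tendsto (fun t : ℝ => (1 / t) * ((∫ ζ, gz ζ ∂(μtτ t)) - gz τ))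
      (𝓝[>] (0:ℝ)) (𝓝 (2 * (G z * τ / (τ - z) ^ 2).re)) := by
    have h1 : Tendsto (slope H 0) (𝓝[≠] (0:ℝ)) (𝓝 (2 * (G z * τ / (τ - z) ^ 2).re)) :=
      hasDerivAt_iff_tendsto_slope.mp hderiv
    have h2 : Tendsto (slope H 0) (𝓝[>] (0:ℝ)) (𝓝 (2 * (G z * τ / (τ - z) ^ 2).re)) :=
      h1.mono_left (nhdsWithin_mono 0 (fun x hx => ne_of_gt hx))
    apply h2.congr'
    filter_upwards [self_mem_nhdsWithin] with t ht
    have ht' : (0:ℝ) < t := ht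
    have hck : IsClarkMeasure (φ t) τ (μtτ t) := hμt t (le_of_lt ht')
    have hint : ∫ ζ, gz ζ ∂(μtτ t) = ∫ ζ, unitDiscPoissonKernel ζ z ∂(μtτ t) := by
      apply integral_congr_ae
      rw [Filter.EventuallyEq, ae_iff]
      apply measure_mono_null _ hck.2.1
      intro ζ hζ
      simp only [mem_setOf_eq] at hζ ⊢
      intro habs
      exact hζ (heq ζ habs)
    have hclark : H t = ∫ ζ, unitDiscPoissonKernel ζ z ∂(μtτ t) := hck.2.2 z hzD
    rw [slope_def_field, hH0]
    simp only [hint, ← hclark]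
    field_simp
    rw [sub_zero, mul_div_assoc, div_self ht'.ne', mul_one]
  have hμint : ∫ ζ, gz ζ ∂μ = ∫ ζ, unitDiscPoissonKernel ζ z ∂μ := by
    apply integral_congr_ae
    rw [Filter.EventuallyEq, ae_iff]
    apply measure_mono_null _ hμcirc
    intro ζ hζ
    simp only [mem_setOf_eq] at hζ ⊢
    intro habs
    exact hζ (heq ζ habs)
  have huniq := tendsto_nhds_unique (hμlim gz hgz_cont) hslope
  rw [hμint, hgzτ] at huniq
  linarith [huniq]

lemma abs_r_mul (r : ℝ) (hr0 : 0 ≤ r) (ζ : ℂ) (hζ : ‖ζ‖ = 1) :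
    ‖(r:ℂ) * ζ‖ = r := by
  rw [norm_mul, Complex.norm_real, Real.norm_eq_abs, _root_.abs_of_nonneg hr0, hζ, mul_one]

lemma slice_meas (ξ : ℂ) (r : ℝ) :
    Measurable (fun ζ : ℂ => unitDiscPoissonKernel ξ ((r:ℂ) * ζ)) := by
  unfold unitDiscPoissonKernel
  apply Measurable.div
  · exact (measurable_const.sub
      (((continuous_norm.comp (continuous_const.mul continuous_id)).pow 2).measurable))
  · exact ((continuous_norm.comp
      ((continuous_const.mul continuous_id).sub continuous_const)).pow 2).measurable

lemma slice_bound (ξ : ℂ) (hξ : ‖ξ‖ = 1) (r : ℝ) (hr0 : 0 < r) (hr1 : r < 1)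
    (ζ : ℂ) (hζ : ‖ζ‖ = 1) :
    0 ≤ unitDiscPoissonKernel ξ ((r:ℂ) * ζ) ∧
      unitDiscPoissonKernel ξ ((r:ℂ) * ζ) ≤ (1 - r ^ 2) / (1 - r) ^ 2 := by
  have habs : ‖(r:ℂ) * ζ‖ = r := abs_r_mul r hr0.le ζ hζ
  constructor
  · exact poisson_nonneg ξ _ (by rw [habs]; exact hr1)
  · have := poisson_le ξ ((r:ℂ) * ζ) hξ (by rw [habs]; exact hr1)
    rwa [habs] at this

lemma slice_integrable (ξ : ℂ) (hξ : ‖ξ‖ = 1) (r : ℝ) (hr0 : 0 < r) (hr1 : r < 1) :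
    Integrable (fun ζ : ℂ => unitDiscPoissonKernel ξ ((r:ℂ) * ζ)) circleLebesgue := by
  apply integrable_on_circle _ (slice_meas ξ r) ((1 - r ^ 2) / (1 - r) ^ 2)
  intro ζ hζ
  obtain ⟨h1, h2⟩ := slice_bound ξ hξ r hr0 hr1 ζ hζ
  rw [Real.norm_eq_abs, _root_.abs_of_nonneg h1]
  exact h2

lemma mean_slice (ξ : ℂ) (hξ : ‖ξ‖ = 1) (r : ℝ) (hr0 : 0 < r) (hr1 : r < 1) :
    ∫ ζ, unitDiscPoissonKernel ξ ((r:ℂ) * ζ) ∂circleLebesgue = 1 := by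
  have hcongr : (fun ζ : ℂ => unitDiscPoissonKernel ξ ((r:ℂ) * ζ))
      =ᵐ[circleLebesgue] (fun ζ : ℂ => unitDiscPoissonKernel ζ ((r:ℂ) * ξ)) :=
    circleLebesgue_ae_circle.mono fun ζ h => poisson_symm ζ ξ r h hξ
  rw [integral_congr_ae hcongr]
  exact poisson_mean _ (by rw [abs_r_mul r hr0.le ξ hξ]; exact hr1)

lemma approx_id (f : ℂ → ℝ) (hf : Continuous f) (C : ℝ) (hC0 : 0 ≤ C)
    (hC : ∀ ζ : ℂ, ‖ζ‖ = 1 → |f ζ| ≤ C) (ξ : ℂ) (hξ : ‖ξ‖ = 1) :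
    Tendsto (fun r : ℝ => ∫ ζ, f ζ * unitDiscPoissonKernel ξ ((r:ℂ) * ζ) ∂circleLebesgue)
      (𝓝[<] (1:ℝ)) (𝓝 (f ξ)) := by
  rw [Metric.tendsto_nhds]
  intro ε hε
  obtain ⟨δ, hδ0, hδ⟩ := Metric.continuousAt_iff.mp hf.continuousAt (ε/4) (by positivity)
  -- choose threshold
  set η : ℝ := min (min (δ/2) (ε * δ^2 / (32 * C + 1))) (1/2) with hη
  have hηpos : 0 < η := by
    apply lt_min (lt_min (by positivity) (by positivity)) (by norm_num)
  have hr1lt : 1 - η < 1 := by linarith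
  filter_upwards [Ioo_mem_nhdsLT_of_mem (show (1:ℝ) ∈ Ioc (1 - η) 1 from ⟨hr1lt, le_refl 1⟩)]
    with r hr
  obtain ⟨hrlow, hrhi⟩ := hr
  have hr0 : 0 < r := by
    have : η ≤ 1/2 := min_le_right _ _
    linarith
  have hr1 : r < 1 := hrhi
  have h1r : 1 - r < η := by linarith
  have hηδ : η ≤ δ/2 := le_trans (min_le_left _ _) (min_le_left _ _)
  have hηε : η ≤ ε * δ^2 / (32 * C + 1) := le_trans (min_le_left _ _) (min_le_right _ _)
  -- integrability facts
  have hPint : Integrable (fun ζ : ℂ => unitDiscPoissonKernel ξ ((r:ℂ) * ζ)) circleLebesgue :=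
    slice_integrable ξ hξ r hr0 hr1
  have hfmeas : Measurable f := hf.measurable
  have hfPint : Integrable (fun ζ : ℂ => f ζ * unitDiscPoissonKernel ξ ((r:ℂ) * ζ)) circleLebesgue := by
    apply integrable_on_circle _ (hfmeas.mul (slice_meas ξ r)) (C * ((1 - r ^ 2) / (1 - r) ^ 2))
    intro ζ hζ
    obtain ⟨h1, h2⟩ := slice_bound ξ hξ r hr0 hr1 ζ hζ
    simp only [Pi.mul_apply, Pi.sub_apply]
    rw [Real.norm_eq_abs, abs_mul, _root_.abs_of_nonneg h1]
    exact mul_le_mul (hC ζ hζ) h2 h1 hC0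
  have hgPint : Integrable (fun ζ : ℂ => (f ζ - f ξ) * unitDiscPoissonKernel ξ ((r:ℂ) * ζ))
      circleLebesgue := by
    apply integrable_on_circle _ ((hfmeas.sub measurable_const).mul (slice_meas ξ r))
      ((2 * C) * ((1 - r ^ 2) / (1 - r) ^ 2))
    intro ζ hζ
    obtain ⟨h1, h2⟩ := slice_bound ξ hξ r hr0 hr1 ζ hζ
    simp only [Pi.mul_apply, Pi.sub_apply]
    rw [Real.norm_eq_abs, abs_mul, _root_.abs_of_nonneg h1]
    have : |f ζ - f ξ| ≤ 2 * C := by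
      have := hC ζ hζ; have := hC ξ hξ
      rw [abs_le] at *
      constructor <;> linarith [this.1, this.2]
    exact mul_le_mul this h2 h1 (by positivity)
  -- rewrite difference as single integral
  have hsplit : (∫ ζ, f ζ * unitDiscPoissonKernel ξ ((r:ℂ) * ζ) ∂circleLebesgue) - f ξ
      = ∫ ζ, (f ζ - f ξ) * unitDiscPoissonKernel ξ ((r:ℂ) * ζ) ∂circleLebesgue := by
    have e1 : ∫ ζ, (f ζ - f ξ) * unitDiscPoissonKernel ξ ((r:ℂ) * ζ) ∂circleLebesgue
        = (∫ ζ, f ζ * unitDiscPoissonKernel ξ ((r:ℂ) * ζ) ∂circleLebesgue)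
          - ∫ ζ, f ξ * unitDiscPoissonKernel ξ ((r:ℂ) * ζ) ∂circleLebesgue := by
      rw [← integral_sub hfPint (hPint.const_mul (f ξ))]
      congr 1; ext ζ; ring
    rw [e1, integral_const_mul, mean_slice ξ hξ r hr0 hr1, mul_one]
  -- pointwise bound
  set K : ℝ := 8 * C * (1 - r ^ 2) / δ ^ 2 with hK
  have hKnn : 0 ≤ K := by
    have : (0:ℝ) ≤ 1 - r^2 := by nlinarith
    positivity
  have hptwise : ∀ ζ : ℂ, ‖ζ‖ = 1 →
      |(f ζ - f ξ) * unitDiscPoissonKernel ξ ((r:ℂ) * ζ)| ≤ ε/4 * unitDiscPoissonKernel ξ ((r:ℂ) * ζ) + K := by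
    intro ζ hζ
    obtain ⟨h1, _⟩ := slice_bound ξ hξ r hr0 hr1 ζ hζ
    rw [abs_mul, _root_.abs_of_nonneg h1]
    by_cases hcase : ‖ζ - ξ‖ < δ
    · have hfd : |f ζ - f ξ| ≤ ε/4 := by
        have := hδ (show dist ζ ξ < δ by rwa [Complex.dist_eq])
        rw [Real.dist_eq] at this
        exact this.le
      have := mul_le_mul_of_nonneg_right hfd h1
      linarith
    · push_neg at hcase
      have hfar : δ/2 ≤ ‖(r:ℂ) * ζ - ξ‖ := by
        have e1 : ‖ζ - ξ‖ - ‖ζ - (r:ℂ) * ζ‖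
            ≤ ‖(r:ℂ) * ζ - ξ‖ := by
          have := norm_sub_norm_le (ζ - ξ) (ζ - (r:ℂ) * ζ)
          calc ‖ζ - ξ‖ - ‖ζ - (r:ℂ) * ζ‖
              ≤ ‖(ζ - ξ) - (ζ - (r:ℂ) * ζ)‖ := this
            _ = ‖(r:ℂ) * ζ - ξ‖ := by ring_nf
        have e2 : ‖ζ - (r:ℂ) * ζ‖ = 1 - r := by
          have : ζ - (r:ℂ) * ζ = ((1 - r : ℝ) : ℂ) * ζ := by push_cast; ring
          rw [this, abs_r_mul (1 - r) (by linarith) ζ hζ]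
        rw [e2] at e1
        have : 1 - r ≤ δ/2 := by linarith [le_trans h1r.le hηδ]
        linarith
      have hPb : unitDiscPoissonKernel ξ ((r:ℂ) * ζ) ≤ (1 - r^2) / (δ/2)^2 := by
        have habs : ‖(r:ℂ) * ζ‖ = r := abs_r_mul r hr0.le ζ hζ
        have := poisson_le_far ξ ((r:ℂ) * ζ) (δ/2) (by positivity) hfar
          (by rw [habs]; exact hr1)
        rwa [habs] at this
      have hfd : |f ζ - f ξ| ≤ 2 * C := by
        have := hC ζ hζ; have := hC ξ hξ
        rw [abs_le] at *
        constructor <;> linarith [this.1, this.2]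
      have hP1 : 0 ≤ unitDiscPoissonKernel ξ ((r:ℂ) * ζ) := h1
      have key : |f ζ - f ξ| * unitDiscPoissonKernel ξ ((r:ℂ) * ζ) ≤ 2 * C * ((1 - r^2) / (δ/2)^2) :=
        mul_le_mul hfd hPb hP1 (by positivity)
      have : 2 * C * ((1 - r^2) / (δ/2)^2) = K := by
        rw [hK]; field_simp; ring
      have hε4P : 0 ≤ ε/4 * unitDiscPoissonKernel ξ ((r:ℂ) * ζ) := by positivity
      linarith
  -- integrate the bound
  have hbd : |(∫ ζ, f ζ * unitDiscPoissonKernel ξ ((r:ℂ) * ζ) ∂circleLebesgue) - f ξ| ≤ ε/4 + K := by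
    rw [hsplit]
    calc |∫ ζ, (f ζ - f ξ) * unitDiscPoissonKernel ξ ((r:ℂ) * ζ) ∂circleLebesgue|
        ≤ ∫ ζ, |(f ζ - f ξ) * unitDiscPoissonKernel ξ ((r:ℂ) * ζ)| ∂circleLebesgue := by
          have hnorm := norm_integral_le_integral_norm (μ := circleLebesgue)
            (fun ζ : ℂ => (f ζ - f ξ) * unitDiscPoissonKernel ξ ((r:ℂ) * ζ))
          simp only [Real.norm_eq_abs] at hnorm
          exact hnorm
      _ ≤ ∫ ζ, (ε/4 * unitDiscPoissonKernel ξ ((r:ℂ) * ζ) + K) ∂circleLebesgue := by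
          apply integral_mono_ae hgPint.abs ((hPint.const_mul (ε/4)).add (integrable_const K))
          exact circleLebesgue_ae_circle.mono fun ζ h => hptwise ζ h
      _ = ε/4 * (∫ ζ, unitDiscPoissonKernel ξ ((r:ℂ) * ζ) ∂circleLebesgue) + K := by
          rw [integral_add (hPint.const_mul (ε/4)) (integrable_const K), integral_const_mul,
            integral_const]
          simp
      _ = ε/4 + K := by rw [mean_slice ξ hξ r hr0 hr1, mul_one]
  -- final numeric estimate
  have hKsmall : K < ε/2 := by
    rw [hK]
    have hd2 : (0:ℝ) < δ^2 := by positivity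
    rw [div_lt_iff₀ hd2]
    have h2 : 1 - r^2 ≤ 2 * (1 - r) := by nlinarith
    have h3 : 1 - r < ε * δ^2 / (32 * C + 1) := lt_of_lt_of_le h1r hηε
    have h3' : (1 - r) * (32 * C + 1) < ε * δ^2 := by
      rw [lt_div_iff₀ (by positivity : (0:ℝ) < 32 * C + 1)] at h3
      nlinarith
    have hrnn : (0:ℝ) ≤ 1 - r := by linarith
    nlinarith [mul_nonneg hC0 hrnn, mul_nonneg hC0 (by nlinarith : (0:ℝ) ≤ 1 - r^2)]
  rw [Real.dist_eq]
  calc |(∫ ζ, f ζ * unitDiscPoissonKernel ξ ((r:ℂ) * ζ) ∂circleLebesgue) - f ξ| ≤ ε/4 + K := hbd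
    _ < ε/4 + ε/2 := by linarith
    _ < ε := by linarith

lemma fP_integrable (f : ℂ → ℝ) (hf : Continuous f) (C : ℝ) (hC0 : 0 ≤ C)
    (hC : ∀ ζ : ℂ, ‖ζ‖ = 1 → |f ζ| ≤ C) (ξ : ℂ) (hξ : ‖ξ‖ = 1)
    (r : ℝ) (hr0 : 0 < r) (hr1 : r < 1) :
    Integrable (fun ζ : ℂ => f ζ * unitDiscPoissonKernel ξ ((r:ℂ) * ζ)) circleLebesgue := by
  apply integrable_on_circle _ (hf.measurable.mul (slice_meas ξ r))
    (C * ((1 - r ^ 2) / (1 - r) ^ 2))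
  intro ζ hζ
  obtain ⟨h1, h2⟩ := slice_bound ξ hξ r hr0 hr1 ζ hζ
  simp only [Pi.mul_apply, Pi.sub_apply]
  rw [Real.norm_eq_abs, abs_mul, _root_.abs_of_nonneg h1]
  exact mul_le_mul (hC ζ hζ) h2 h1 hC0

end Helpers

/-- the limit measure `μ` is the weak-star limit of the explicit densities. -/
theorem statement14
    (φ : ℝ → ℂ → ℂ) (hφ : IsCtsSemigroup φ)
    (G : ℂ → ℂ) (hG : IsInfGenerator φ G)
    (τ : ℂ) (hτ : ‖τ‖ = 1) (lam : ℝ)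
    (hBRFP : HasBRFPWithCoeffs φ τ lam)
    (μtτ : ℝ → MeasureTheory.Measure ℂ)
    (hμt : ∀ t : ℝ, 0 ≤ t → IsClarkMeasure (φ t) τ (μtτ t))
    (μ : MeasureTheory.Measure ℂ) (hμfin : MeasureTheory.IsFiniteMeasure μ)
    (hμcirc : μ {z : ℂ | ‖z‖ ≠ 1} = 0)
    (hμlim : ∀ f : ℂ → ℝ, Continuous f →
      Filter.Tendsto (fun t : ℝ => (1 / t) * ((∫ ζ, f ζ ∂(μtτ t)) - f τ))
        (𝓝[>] (0 : ℝ)) (𝓝 (-lam * f τ + ∫ ζ, f ζ ∂μ))) :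
    ∀ f : ℂ → ℝ, Continuous f →
      Filter.Tendsto
        (fun r : ℝ => ∫ ζ, f ζ *
          (2 * (G ((r : ℂ) * ζ) * τ / (τ - (r : ℂ) * ζ) ^ 2).re +
            lam * ((τ + (r : ℂ) * ζ) / (τ - (r : ℂ) * ζ)).re) ∂circleLebesgue)
        (𝓝[<] (1 : ℝ)) (𝓝 (∫ ζ, f ζ ∂μ)) := by
  intro f hf
  haveI := hμfin
  obtain ⟨hφ1, hφ0, hφ2, hφ3⟩ := hφ
  obtain ⟨C, hC0, hC⟩ := exists_circle_bound f hf
  have hμae : ∀ᵐ ξ ∂μ, ‖ξ‖ = 1 := by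
    rw [ae_iff]; simpa using hμcirc
  have hIoo : Ioo (0:ℝ) 1 ∈ 𝓝[<] (1:ℝ) :=
    Ioo_mem_nhdsLT_of_mem ⟨by norm_num, le_refl 1⟩
  set F : ℝ → ℂ → ℝ :=
    fun r ξ => ∫ ζ, f ζ * unitDiscPoissonKernel ξ ((r:ℂ) * ζ) ∂circleLebesgue with hF
  -- measurability on products
  have hmeas_prod : ∀ r : ℝ,
      Measurable (fun p : ℂ × ℂ => f p.2 * unitDiscPoissonKernel p.1 ((r:ℂ) * p.2)) := by
    intro r
    apply (hf.measurable.comp measurable_snd).mul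
    unfold unitDiscPoissonKernel
    apply Measurable.div
    · exact measurable_const.sub
        (((continuous_norm.comp (continuous_const.mul continuous_snd)).pow 2).measurable)
    · exact ((continuous_norm.comp
        ((continuous_const.mul continuous_snd).sub continuous_fst)).pow 2).measurable
  have hmeas_prod' : ∀ r : ℝ,
      Measurable (fun p : ℂ × ℂ => f p.1 * unitDiscPoissonKernel p.2 ((r:ℂ) * p.1)) := by
    intro r
    apply (hf.measurable.comp measurable_fst).mul
    unfold unitDiscPoissonKernel
    apply Measurable.div
    · exact measurable_const.sub
        (((continuous_norm.comp (continuous_const.mul continuous_fst)).pow 2).measurable)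
    · exact ((continuous_norm.comp
        ((continuous_const.mul continuous_fst).sub continuous_snd)).pow 2).measurable
  -- ae both coordinates on circle
  have haeprod : ∀ᵐ p ∂(circleLebesgue.prod μ),
      ‖p.1‖ = 1 ∧ ‖p.2‖ = 1 := by
    rw [ae_iff]
    apply measure_mono_null
      (show {p : ℂ × ℂ | ¬(‖p.1‖ = 1 ∧ ‖p.2‖ = 1)} ⊆
        ({z : ℂ | ‖z‖ ≠ 1} ×ˢ univ) ∪ (univ ×ˢ {z : ℂ | ‖z‖ ≠ 1}) from ?_)
    · apply measure_union_null
      · rw [Measure.prod_prod]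
        rw [circleLebesgue_off_circle]; simp
      · rw [Measure.prod_prod]
        rw [hμcirc]; simp
    · intro p hp
      simp only [mem_setOf_eq, not_and_or] at hp
      rcases hp with h | h
      · left; exact ⟨h, mem_univ _⟩
      · right; exact ⟨mem_univ _, h⟩
  -- product integrability
  have hprodint : ∀ r ∈ Ioo (0:ℝ) 1,
      Integrable (fun p : ℂ × ℂ => f p.1 * unitDiscPoissonKernel p.2 ((r:ℂ) * p.1))
        (circleLebesgue.prod μ) := by
    intro r hr
    apply Integrable.mono' (integrable_const (C * ((1 - r ^ 2) / (1 - r) ^ 2)))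
      (hmeas_prod' r).aestronglyMeasurable
    filter_upwards [haeprod] with p hp
    obtain ⟨h1, h2⟩ := hp
    obtain ⟨hP0, hPle⟩ := slice_bound p.2 h2 r hr.1 hr.2 p.1 h1
    rw [Real.norm_eq_abs, abs_mul, _root_.abs_of_nonneg hP0]
    exact mul_le_mul (hC _ h1) hPle hP0 hC0
  -- the DCT limit
  have hDCT : Tendsto (fun r => ∫ ξ, F r ξ ∂μ) (𝓝[<] (1:ℝ)) (𝓝 (∫ ξ, f ξ ∂μ)) := by
    apply tendsto_integral_filter_of_dominated_convergence (bound := fun _ => C)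
    · filter_upwards with r
      exact ((hmeas_prod r).aestronglyMeasurable
        (μ := μ.prod circleLebesgue)).integral_prod_right'
    · filter_upwards [hIoo] with r hr
      filter_upwards [hμae] with ξ hξ
      have hPint := slice_integrable ξ hξ r hr.1 hr.2
      have hfP := fP_integrable f hf C hC0 hC ξ hξ r hr.1 hr.2
      have h1 : ‖F r ξ‖ ≤ ∫ ζ, C * unitDiscPoissonKernel ξ ((r:ℂ) * ζ) ∂circleLebesgue := by
        calc ‖F r ξ‖ ≤ ∫ ζ, ‖f ζ * unitDiscPoissonKernel ξ ((r:ℂ) * ζ)‖ ∂circleLebesgue :=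
              norm_integral_le_integral_norm _
          _ ≤ ∫ ζ, C * unitDiscPoissonKernel ξ ((r:ℂ) * ζ) ∂circleLebesgue := by
              apply integral_mono_ae hfP.norm (hPint.const_mul C)
              filter_upwards [circleLebesgue_ae_circle] with ζ hζ
              obtain ⟨hP0, _⟩ := slice_bound ξ hξ r hr.1 hr.2 ζ hζ
              rw [Real.norm_eq_abs, abs_mul, _root_.abs_of_nonneg hP0]
              exact mul_le_mul_of_nonneg_right (hC ζ hζ) hP0
      rw [integral_const_mul, mean_slice ξ hξ r hr.1 hr.2, mul_one] at h1
      exact h1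
    · exact integrable_const C
    · filter_upwards [hμae] with ξ hξ
      exact approx_id f hf C hC0 hC ξ hξ
  -- eventual equality with the target function
  have hev : (fun r => ∫ ξ, F r ξ ∂μ) =ᶠ[𝓝[<] (1:ℝ)]
      (fun r : ℝ => ∫ ζ, f ζ *
        (2 * (G ((r : ℂ) * ζ) * τ / (τ - (r : ℂ) * ζ) ^ 2).re +
          lam * ((τ + (r : ℂ) * ζ) / (τ - (r : ℂ) * ζ)).re) ∂circleLebesgue) := by
    filter_upwards [hIoo] with r hr
    have hstep1 : ∫ ζ, f ζ *
        (2 * (G ((r : ℂ) * ζ) * τ / (τ - (r : ℂ) * ζ) ^ 2).re +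
          lam * ((τ + (r : ℂ) * ζ) / (τ - (r : ℂ) * ζ)).re) ∂circleLebesgue
        = ∫ ζ, (∫ ξ, f ζ * unitDiscPoissonKernel ξ ((r:ℂ) * ζ) ∂μ) ∂circleLebesgue := by
      apply integral_congr_ae
      filter_upwards [circleLebesgue_ae_circle] with ζ hζ
      have habs : ‖(r:ℂ) * ζ‖ = r := abs_r_mul r hr.1.le ζ hζ
      have hkey := key_identity φ G hG hφ0 τ hτ lam μtτ hμt μ hμcirc hμlim
        ((r:ℂ) * ζ) (by rw [habs]; exact hr.2)
      rw [integral_const_mul, ← hkey]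
    have hswap := integral_integral_swap
      (f := fun ζ ξ => f ζ * unitDiscPoissonKernel ξ ((r:ℂ) * ζ))
      (μ := circleLebesgue) (ν := μ) (by exact hprodint r hr)
    rw [hstep1, hswap]
  exact hDCT.congr' hev
end

section
/- Let (φ_t)_{t≥0} be a continuous semigroup of holomorphic self-maps of the unit disc 𝔻 and let τ ∈ ∂𝔻. Then the family of Aleksandrov–Clark measures (μ_{t,τ})_{t≥0} is continuous in the weak-star topology with respect to t: for every t₀ ≥ 0 and every continuous function f : ∂𝔻 → ℝ, ∫_{∂𝔻} f dμ_{t,τ} → ∫_{∂𝔻} f dμ_{t₀,τ} as t → t₀. -/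
open Complex MeasureTheory Filter Topology Set
open scoped ENNReal NNReal

namespace S16

lemma abs_cexp (θ : ℝ) : norm (Complex.exp (θ * Complex.I)) = 1 := by
  simp

lemma sub_ne {w z : ℂ} (hw : norm w = 1) (hz : norm z < 1) : w - z ≠ 0 := by
  intro h
  rw [sub_eq_zero] at h
  rw [← h, hw] at hz
  exact lt_irrefl _ hz

lemma re_herglotz {w z : ℂ} (hw : norm w = 1) (hz : norm z < 1) :
    ((w + z) / (w - z)).re = unitDiscPoissonKernel w z := by
  have h1 : Complex.normSq w = 1 := by rw [← Complex.sq_norm, hw]; norm_num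
  have hne : w - z ≠ 0 := sub_ne hw hz
  have hd : Complex.normSq (w - z) ≠ 0 := by simpa [Complex.normSq_eq_zero] using hne
  have hzw : norm (z - w) ^ 2 = Complex.normSq (w - z) := by
    rw [Complex.sq_norm, ← Complex.normSq_neg]; ring_nf
  rw [Complex.div_re, unitDiscPoissonKernel, hzw, ← add_div]
  congr 1
  have h2 : norm z ^ 2 = Complex.normSq z := Complex.sq_norm z
  simp only [Complex.add_re, Complex.add_im, Complex.sub_re, Complex.sub_im,
    Complex.normSq_apply] at h1 h2 ⊢
  rw [h2]; ring_nf; nlinarith [h1]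

lemma poisson_nonneg {ζ z : ℂ} (hz : norm z ≤ 1) : 0 ≤ unitDiscPoissonKernel ζ z := by
  apply div_nonneg _ (sq_nonneg _)
  nlinarith [norm_nonneg z]

lemma poisson_le {ζ z : ℂ} (hζ : norm ζ = 1) {r : ℝ} (hzr : norm z ≤ r)
    (hr : r < 1) : unitDiscPoissonKernel ζ z ≤ 1 / (1 - r) ^ 2 := by
  have h0 : norm z ≤ 1 := hzr.trans hr.le
  have hr0 : (0:ℝ) < 1 - r := by linarith
  have hd : 1 - r ≤ norm (z - ζ) := by
    have h := norm_sub_norm_le ζ z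
    have h2 : norm (ζ - z) = norm (z - ζ) := norm_sub_rev ζ z
    rw [h2] at h
    linarith [hζ ▸ h]
  have hdpos : (0:ℝ) < norm (z - ζ) := lt_of_lt_of_le hr0 hd
  have hd2 : (1 - r)^2 ≤ norm (z - ζ) ^ 2 := by
    apply pow_le_pow_left₀ hr0.le hd
  rw [unitDiscPoissonKernel, div_le_div_iff₀ (by positivity) (by positivity)]
  nlinarith [norm_nonneg z, sq_nonneg (norm z)]

lemma poisson_symm {w ζ : ℂ} (hw : norm w = 1) (hζ : norm ζ = 1) (r : ℝ) :
    unitDiscPoissonKernel ζ ((r:ℂ) * w) = unitDiscPoissonKernel w ((r:ℂ) * ζ) := by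
  have h1 : Complex.normSq w = 1 := by rw [← Complex.sq_norm, hw]; norm_num
  have h2 : Complex.normSq ζ = 1 := by rw [← Complex.sq_norm, hζ]; norm_num
  have hnum : norm ((r:ℂ)*w) ^ 2 = norm ((r:ℂ)*ζ) ^ 2 := by
    simp only [Complex.sq_norm, Complex.normSq_mul, h1, h2]
  simp only [Complex.normSq_apply] at h1 h2
  have hden : norm ((r:ℂ)*w - ζ)^2 = norm ((r:ℂ)*ζ - w)^2 := by
    simp only [Complex.sq_norm, Complex.normSq_apply, Complex.sub_re, Complex.sub_im,
      Complex.mul_re, Complex.mul_im, Complex.ofReal_re, Complex.ofReal_im]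
    ring_nf
    linear_combination (r^2 - 1) * h1 + (1 - r^2) * h2
  rw [unitDiscPoissonKernel, unitDiscPoissonKernel, hnum, hden]

lemma cont_g {z : ℂ} (hz : norm z < 1) :
    Continuous (fun θ : ℝ => Complex.exp (θ * Complex.I) * (Complex.exp (θ * Complex.I) - z)⁻¹) := by
  have hc : Continuous (fun θ : ℝ => Complex.exp (θ * Complex.I)) := by
    exact Complex.continuous_exp.comp (Complex.continuous_ofReal.mul continuous_const)
  exact hc.mul ((hc.sub continuous_const).inv₀ (fun θ => sub_ne (abs_cexp θ) hz))

lemma integral_g {z : ℂ} (hz : norm z < 1) :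
    ∫ θ in (0:ℝ)..(2*Real.pi), Complex.exp (θ * Complex.I) * (Complex.exp (θ * Complex.I) - z)⁻¹
      = 2 * Real.pi := by
  have hball : z ∈ Metric.ball (0:ℂ) 1 := by
    simpa using hz
  have h := circleIntegral.integral_sub_inv_of_mem_ball hball
  rw [circleIntegral] at h
  simp only [deriv_circleMap, circleMap, zero_add, one_mul, smul_eq_mul, Complex.ofReal_one] at h
  have h2 : ∫ θ in (0:ℝ)..(2*Real.pi),
      Complex.I * (Complex.exp (θ * Complex.I) * (Complex.exp (θ * Complex.I) - z)⁻¹)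
      = 2 * Real.pi * Complex.I := by
    rw [← h]; congr 1; ext θ; ring
  rw [intervalIntegral.integral_const_mul] at h2
  have h3 : Complex.I * (∫ θ in (0:ℝ)..(2*Real.pi),
      Complex.exp (θ * Complex.I) * (Complex.exp (θ * Complex.I) - z)⁻¹)
      = Complex.I * (2 * Real.pi) := by rw [h2]; ring
  exact mul_left_cancel₀ Complex.I_ne_zero h3

lemma integral_herglotz {z : ℂ} (hz : norm z < 1) :
    ∫ θ in (0:ℝ)..(2*Real.pi),
      (Complex.exp (θ * Complex.I) + z) / (Complex.exp (θ * Complex.I) - z)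
      = 2 * Real.pi := by
  have hg := integral_g hz
  have hgi : IntervalIntegrable
      (fun θ : ℝ => Complex.exp (θ * Complex.I) * (Complex.exp (θ * Complex.I) - z)⁻¹)
      volume 0 (2*Real.pi) := (cont_g hz).intervalIntegrable _ _
  have heq : ∀ θ : ℝ, (Complex.exp (θ * Complex.I) + z) / (Complex.exp (θ * Complex.I) - z)
      = 2 * (Complex.exp (θ * Complex.I) * (Complex.exp (θ * Complex.I) - z)⁻¹) - 1 := by
    intro θ
    have hne := sub_ne (abs_cexp θ) hz
    field_simp
    ring
  rw [intervalIntegral.integral_congr (g := fun θ =>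
      2 * (Complex.exp (θ * Complex.I) * (Complex.exp (θ * Complex.I) - z)⁻¹) - 1)
      (fun θ _ => heq θ)]
  rw [intervalIntegral.integral_sub ((hgi.const_mul 2)) (intervalIntegrable_const),
    intervalIntegral.integral_const_mul, hg, intervalIntegral.integral_const]
  simp
  ring

lemma cont_herglotz {z : ℂ} (hz : norm z < 1) :
    Continuous (fun θ : ℝ =>
      (Complex.exp (θ * Complex.I) + z) / (Complex.exp (θ * Complex.I) - z)) := by
  have hc : Continuous (fun θ : ℝ => Complex.exp (θ * Complex.I)) :=
    Complex.continuous_exp.comp (Complex.continuous_ofReal.mul continuous_const)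
  exact (hc.add continuous_const).div (hc.sub continuous_const)
    (fun θ => sub_ne (abs_cexp θ) hz)

lemma integral_poisson {z : ℂ} (hz : norm z < 1) :
    ∫ θ in (0:ℝ)..(2*Real.pi), unitDiscPoissonKernel (Complex.exp (θ * Complex.I)) z
      = 2 * Real.pi := by
  have h1 : ∀ θ : ℝ, unitDiscPoissonKernel (Complex.exp (θ * Complex.I)) z
      = Complex.reCLM ((Complex.exp (θ * Complex.I) + z) / (Complex.exp (θ * Complex.I) - z)) :=
    fun θ => (re_herglotz (abs_cexp θ) hz).symm
  calc ∫ θ in (0:ℝ)..(2*Real.pi), unitDiscPoissonKernel (Complex.exp (θ * Complex.I)) z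
      = ∫ θ in (0:ℝ)..(2*Real.pi),
        Complex.reCLM ((Complex.exp (θ * Complex.I) + z) / (Complex.exp (θ * Complex.I) - z)) :=
        intervalIntegral.integral_congr (fun θ _ => h1 θ)
    _ = Complex.reCLM (∫ θ in (0:ℝ)..(2*Real.pi),
        (Complex.exp (θ * Complex.I) + z) / (Complex.exp (θ * Complex.I) - z)) :=
        Complex.reCLM.intervalIntegral_comp_comm ((cont_herglotz hz).intervalIntegrable _ _)
    _ = 2 * Real.pi := by rw [integral_herglotz hz]; simp

lemma abs_r_exp {r : ℝ} (hr0 : 0 ≤ r) (θ : ℝ) :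
    norm ((r:ℂ) * Complex.exp (θ * Complex.I)) = r := by
  simp [abs_cexp, _root_.abs_of_nonneg hr0]

lemma cont_poisson_theta {ζ : ℂ} (hζ : norm ζ = 1) {r : ℝ} (hr0 : 0 ≤ r) (hr1 : r < 1) :
    Continuous (fun θ : ℝ => unitDiscPoissonKernel ζ ((r:ℂ) * Complex.exp (θ * Complex.I))) := by
  have hc : Continuous (fun θ : ℝ => (r:ℂ) * Complex.exp (θ * Complex.I)) :=
    continuous_const.mul (Complex.continuous_exp.comp (Complex.continuous_ofReal.mul continuous_const))
  apply Continuous.div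
  · exact (continuous_const.sub ((continuous_norm.comp hc).pow 2))
  · exact ((continuous_norm.comp (hc.sub continuous_const)).pow 2)
  · intro θ
    have h1 : norm ((r:ℂ) * Complex.exp (θ * Complex.I)) < 1 := by
      rw [abs_r_exp hr0]; exact hr1
    have hne := sub_ne hζ h1
    have h2 : (r:ℂ) * Complex.exp (θ * Complex.I) - ζ ≠ 0 := by
      intro h
      apply hne
      have : ζ - (r:ℂ) * Complex.exp (θ * Complex.I) = -((r:ℂ) * Complex.exp (θ * Complex.I) - ζ) := by ring
      rw [this, h, neg_zero]
    intro h
    apply h2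
    have := pow_eq_zero_iff (n := 2) (by norm_num) |>.1 h
    exact norm_eq_zero.1 this

lemma integral_poisson_boundary {ζ : ℂ} (hζ : norm ζ = 1) {r : ℝ} (hr0 : 0 ≤ r)
    (hr1 : r < 1) :
    ∫ θ in (0:ℝ)..(2*Real.pi), unitDiscPoissonKernel ζ ((r:ℂ) * Complex.exp (θ * Complex.I))
      = 2 * Real.pi := by
  have h1 : ∀ θ : ℝ, unitDiscPoissonKernel ζ ((r:ℂ) * Complex.exp (θ * Complex.I))
      = unitDiscPoissonKernel (Complex.exp (θ * Complex.I)) ((r:ℂ) * ζ) :=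
    fun θ => poisson_symm (abs_cexp θ) hζ r
  rw [intervalIntegral.integral_congr (fun θ _ => h1 θ)]
  apply integral_poisson
  rw [norm_mul, Complex.norm_real, hζ, mul_one, Real.norm_of_nonneg hr0]
  exact hr1

set_option maxHeartbeats 1000000 in lemma approx_identity (f : ℂ → ℝ) (hf : Continuous f) {ε : ℝ} (hε : 0 < ε) :
    ∃ r : ℝ, 0 < r ∧ r < 1 ∧ ∀ ζ : ℂ, norm ζ = 1 →
      |(∫ θ in (0:ℝ)..(2*Real.pi),
          f (Complex.exp (θ * Complex.I)) * unitDiscPoissonKernel ζ ((r:ℂ) * Complex.exp (θ * Complex.I)))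
        - 2 * Real.pi * f ζ| ≤ ε := by
  obtain ⟨C, hC⟩ := (isCompact_closedBall (0:ℂ) 1).exists_bound_of_continuousOn hf.continuousOn
  set C' : ℝ := max C 0 with hC'def
  have hC'0 : 0 ≤ C' := le_max_right _ _
  have hC' : ∀ z : ℂ, norm z ≤ 1 → |f z| ≤ C' := by
    intro z hz
    have : z ∈ Metric.closedBall (0:ℂ) 1 := by
      simpa [Metric.mem_closedBall, Complex.dist_eq] using hz
    exact le_trans (hC z this) (le_max_left _ _)
  set ε₁ : ℝ := ε / (2 * (2 * Real.pi + 1)) with hε₁def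
  have hπ : (0:ℝ) < Real.pi := Real.pi_pos
  have hε₁ : 0 < ε₁ := by positivity
  have hunif := (isCompact_closedBall (0:ℂ) 1).uniformContinuousOn_of_continuous hf.continuousOn
  rw [Metric.uniformContinuousOn_iff] at hunif
  obtain ⟨δ, hδ0, hδ⟩ := hunif ε₁ hε₁
  set K : ℝ := 128 * Real.pi * C' / δ ^ 2 + 1 with hKdef
  have hK0 : 0 < K := by positivity
  set η : ℝ := min (min (δ/4) (ε/(2*K))) (1/2) with hηdef
  have hη0 : 0 < η := lt_min (lt_min (by positivity) (by positivity)) (by norm_num)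
  set r : ℝ := 1 - η with hrdef
  have hηhalf : η ≤ 1/2 := min_le_right _ _
  have hr1 : r < 1 := by simp only [hrdef]; linarith
  have hr0 : (0:ℝ) < r := by simp only [hrdef]; linarith
  have hηδ : η ≤ δ/4 := le_trans (min_le_left _ _) (min_le_left _ _)
  have hηε : η ≤ ε/(2*K) := le_trans (min_le_left _ _) (min_le_right _ _)
  have hrsq : (0:ℝ) ≤ 1 - r^2 := by nlinarith
  have h14 : 1 - r ^ 2 ≤ 2 * η := by nlinarith
  clear_value C' ε₁ K η r
  refine ⟨r, hr0, hr1, ?_⟩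
  intro ζ hζ
  set P : ℝ → ℝ := fun θ => unitDiscPoissonKernel ζ ((r:ℂ) * Complex.exp (θ * Complex.I)) with hPdef
  have hPc : Continuous P := cont_poisson_theta hζ hr0.le hr1
  have hPnn : ∀ θ, 0 ≤ P θ := by
    intro θ
    apply poisson_nonneg
    rw [abs_r_exp hr0.le]
    exact hr1.le
  have hInt : ∫ θ in (0:ℝ)..(2*Real.pi), P θ = 2 * Real.pi :=
    integral_poisson_boundary hζ hr0.le hr1
  have hfc : Continuous (fun θ : ℝ => f (Complex.exp (θ * Complex.I))) :=
    hf.comp (Complex.continuous_exp.comp (Complex.continuous_ofReal.mul continuous_const))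
  set N : ℝ := 2 * C' * ((1 - r^2) * (16 / δ^2)) with hNdef
  have hN0 : 0 ≤ N := by
    rw [hNdef]
    exact mul_nonneg (by linarith) (mul_nonneg hrsq (by positivity))
  clear_value N
  have key : ∀ θ : ℝ, |f (Complex.exp (θ * Complex.I)) - f ζ| * P θ ≤ ε₁ * P θ + N := by
    intro θ
    set w : ℂ := Complex.exp (θ * Complex.I) with hwdef
    have hw : norm w = 1 := abs_cexp θ
    by_cases hnear : dist w ζ < δ
    · have h1 : |f w - f ζ| ≤ ε₁ := by
        have h2 := hδ w (by simpa [Metric.mem_closedBall, Complex.dist_eq] using hw.le)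
          ζ (by simpa [Metric.mem_closedBall, Complex.dist_eq] using hζ.le) hnear
        rw [Real.dist_eq] at h2
        exact h2.le
      have h3 := mul_le_mul_of_nonneg_right h1 (hPnn θ)
      linarith
    · push_neg at hnear
      have hfar : P θ ≤ (1 - r^2) * (16 / δ^2) := by
        have hd : δ/2 ≤ norm ((r:ℂ) * w - ζ) := by
          have h3 : norm (w - (r:ℂ)*w) = 1 - r := by
            have he : w - (r:ℂ)*w = (1 - (r:ℂ)) * w := by ring
            rw [he, norm_mul, hw, mul_one]
            rw [show ((1:ℂ) - (r:ℂ)) = ((1 - r : ℝ) : ℂ) by push_cast; ring]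
            rw [Complex.norm_real, Real.norm_of_nonneg (by linarith)]
          have h4 : norm (w - ζ) ≤ norm (w - (r:ℂ)*w) + norm ((r:ℂ)*w - ζ) := by
            have h5 := norm_add_le (w - (r:ℂ)*w) ((r:ℂ)*w - ζ)
            simpa using h5
          have h5 : δ ≤ norm (w - ζ) := by rw [Complex.dist_eq] at hnear; exact hnear
          have h6 : 1 - r ≤ δ/4 := by simp only [hrdef]; linarith
          linarith
        set A : ℝ := norm ((r:ℂ)*w - ζ)^2 with hAdef
        have hA : δ^2/4 ≤ A := by
          have := pow_le_pow_left₀ (by linarith : (0:ℝ) ≤ δ/2) hd 2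
          calc δ^2/4 = (δ/2)^2 := by ring
            _ ≤ A := this
        have hA0 : 0 < A := lt_of_lt_of_le (by positivity) hA
        have habs : norm ((r:ℂ)*w) = r := abs_r_exp hr0.le θ
        have hPθ : P θ = (1 - r^2) / A := by
          simp only [hPdef, unitDiscPoissonKernel, ← hwdef, habs, hAdef]
        rw [hPθ, div_le_iff₀ hA0]
        have hm := mul_le_mul_of_nonneg_left hA
          (mul_nonneg hrsq (by positivity) : (0:ℝ) ≤ (1 - r^2) * (16/δ^2))
        have hid : (1 - r^2) * (16/δ^2) * (δ^2/4) = 4 * (1 - r^2) := by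
          field_simp
          ring
        rw [hid] at hm
        nlinarith [hm, hrsq]
      have h7 : |f w - f ζ| ≤ 2 * C' := by
        have h8 : |f w - f ζ| ≤ |f w| + |f ζ| := by
          calc |f w - f ζ| = |f w + -(f ζ)| := by ring_nf
            _ ≤ |f w| + |-(f ζ)| := abs_add_le _ _
            _ = |f w| + |f ζ| := by rw [abs_neg]
        have h9 := hC' w hw.le
        have h10 := hC' ζ hζ.le
        linarith
      have h11 : |f w - f ζ| * P θ ≤ 2 * C' * ((1 - r^2) * (16/δ^2)) :=
        mul_le_mul h7 hfar (hPnn θ) (by linarith)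
      have h12 : 0 ≤ ε₁ * P θ := mul_nonneg hε₁.le (hPnn θ)
      simp only [hNdef]
      linarith
  -- integrability
  have hgint : IntervalIntegrable (fun θ : ℝ => f (Complex.exp (θ * Complex.I)) * P θ)
      volume 0 (2*Real.pi) := (hfc.mul hPc).intervalIntegrable _ _
  have hPint : IntervalIntegrable P volume 0 (2*Real.pi) := hPc.intervalIntegrable _ _
  -- rewrite the difference
  have hsplit : (∫ θ in (0:ℝ)..(2*Real.pi), f (Complex.exp (θ * Complex.I)) * P θ)
      - 2 * Real.pi * f ζ
      = ∫ θ in (0:ℝ)..(2*Real.pi), (f (Complex.exp (θ * Complex.I)) - f ζ) * P θ := by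
    have h13 : ∀ θ : ℝ, (f (Complex.exp (θ * Complex.I)) - f ζ) * P θ
        = f (Complex.exp (θ * Complex.I)) * P θ - f ζ * P θ := fun θ => by ring
    rw [intervalIntegral.integral_congr (fun θ _ => h13 θ),
      intervalIntegral.integral_sub hgint (hPint.const_mul _),
      intervalIntegral.integral_const_mul, hInt]
    ring
  rw [hsplit]
  -- bound the integral
  have hbound : |∫ θ in (0:ℝ)..(2*Real.pi), (f (Complex.exp (θ * Complex.I)) - f ζ) * P θ|
      ≤ ∫ θ in (0:ℝ)..(2*Real.pi), (ε₁ * P θ + N) := by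
    have h2π : (0:ℝ) ≤ 2 * Real.pi := by positivity
    have hnorm := intervalIntegral.norm_integral_le_integral_norm
      (f := fun θ : ℝ => (f (Complex.exp (θ * Complex.I)) - f ζ) * P θ)
      (μ := volume) h2π
    rw [Real.norm_eq_abs] at hnorm
    refine le_trans hnorm ?_
    apply intervalIntegral.integral_mono_on h2π
    · exact (((hfc.sub continuous_const).mul hPc).norm).intervalIntegrable _ _
    · exact ((continuous_const.mul hPc).add continuous_const).intervalIntegrable _ _
    · intro θ _
      rw [Real.norm_eq_abs, abs_mul, _root_.abs_of_nonneg (hPnn θ)]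
      exact key θ
  have hval : ∫ θ in (0:ℝ)..(2*Real.pi), (ε₁ * P θ + N) = ε₁ * (2 * Real.pi) + 2 * Real.pi * N := by
    rw [intervalIntegral.integral_add (hPint.const_mul _) intervalIntegrable_const,
      intervalIntegral.integral_const_mul, hInt, intervalIntegral.integral_const]
    simp only [smul_eq_mul]
    ring
  rw [hval] at hbound
  -- final numeric estimate
  have hb1 : ε₁ * (2 * Real.pi) ≤ ε/2 := by
    rw [hε₁def]
    rw [div_mul_eq_mul_div, div_le_div_iff₀ (by positivity) (by norm_num)]
    nlinarith
  have hb2 : 2 * Real.pi * N ≤ ε/2 := by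
    have h15 : 2 * Real.pi * N ≤ (K - 1) * η := by
      simp only [hNdef, hKdef]
      have : 2 * Real.pi * (2 * C' * ((1 - r^2) * (16/δ^2)))
          ≤ 2 * Real.pi * (2 * C' * ((2 * η) * (16/δ^2))) := by
        apply mul_le_mul_of_nonneg_left _ (by positivity)
        apply mul_le_mul_of_nonneg_left _ (by linarith)
        apply mul_le_mul_of_nonneg_right h14 (by positivity)
      refine le_trans this (le_of_eq ?_)
      field_simp
      ring
    have h16 : (K - 1) * η ≤ K * η := by nlinarith
    have h17 : K * η ≤ K * (ε/(2*K)) := mul_le_mul_of_nonneg_left hηε hK0.le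
    have h18 : K * (ε/(2*K)) = ε/2 := by field_simp
    linarith
  linarith

lemma ae_circle {μ : Measure ℂ} (h : μ {z : ℂ | norm z ≠ 1} = 0) :
    ∀ᵐ ζ ∂μ, norm ζ = 1 := by
  rw [ae_iff]
  simpa using h

lemma clark_mass {g : ℂ → ℂ} {τ : ℂ} {μ : Measure ℂ} (hc : IsClarkMeasure g τ μ) :
    (μ Set.univ).toReal = ((τ + g 0) / (τ - g 0)).re := by
  haveI := hc.1
  have h0 : (0:ℂ) ∈ unitDisc := by simp [unitDisc]
  rw [hc.2.2 0 h0]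
  have h1 : ∫ ζ, unitDiscPoissonKernel ζ 0 ∂μ = ∫ _ζ, (1:ℝ) ∂μ := by
    apply MeasureTheory.integral_congr_ae
    filter_upwards [ae_circle hc.2.1] with ζ h
    simp [unitDiscPoissonKernel, h]
  rw [h1, MeasureTheory.integral_const]
  simp
  rfl

lemma integrable_on_circle {μ : Measure ℂ} [IsFiniteMeasure μ]
    (h : μ {z : ℂ | norm z ≠ 1} = 0) {g : ℂ → ℝ} (hg : AEStronglyMeasurable g μ)
    {C : ℝ} (hC : ∀ ζ : ℂ, norm ζ = 1 → |g ζ| ≤ C) : Integrable g μ := by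
  apply Integrable.mono' (integrable_const C) hg
  filter_upwards [ae_circle h] with ζ hζ
  rw [Real.norm_eq_abs]
  exact hC ζ hζ

lemma fubini_step (μ : Measure ℂ) [IsFiniteMeasure μ] (hμ1 : μ {z : ℂ | norm z ≠ 1} = 0)
    (f : ℂ → ℝ) (hf : Continuous f) {r : ℝ} (hr0 : 0 < r) (hr1 : r < 1) :
    Integrable (fun ζ => ∫ θ in (0:ℝ)..(2*Real.pi),
        f (Complex.exp (θ * Complex.I)) * unitDiscPoissonKernel ζ ((r:ℂ) * Complex.exp (θ * Complex.I))) μ ∧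
    (∫ ζ, (∫ θ in (0:ℝ)..(2*Real.pi),
        f (Complex.exp (θ * Complex.I)) * unitDiscPoissonKernel ζ ((r:ℂ) * Complex.exp (θ * Complex.I))) ∂μ)
      = ∫ θ in (0:ℝ)..(2*Real.pi),
          f (Complex.exp (θ * Complex.I)) * ∫ ζ, unitDiscPoissonKernel ζ ((r:ℂ) * Complex.exp (θ * Complex.I)) ∂μ := by
  have h2π : (0:ℝ) ≤ 2 * Real.pi := by positivity
  set ν : Measure ℝ := volume.restrict (Ioc (0:ℝ) (2*Real.pi)) with hνdef
  haveI : IsFiniteMeasure ν := by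
    constructor
    rw [hνdef, Measure.restrict_apply_univ, Real.volume_Ioc]
    exact ENNReal.ofReal_lt_top
  set g : ℂ → ℝ → ℝ := fun ζ θ =>
    f (Complex.exp (θ * Complex.I)) * unitDiscPoissonKernel ζ ((r:ℂ) * Complex.exp (θ * Complex.I))
    with hgdef
  -- measurability on the product
  have hgm : AEStronglyMeasurable (Function.uncurry g) (μ.prod ν) := by
    apply Measurable.aestronglyMeasurable
    have hc1 : Continuous fun p : ℂ × ℝ => f (Complex.exp (p.2 * Complex.I)) :=
      hf.comp (Complex.continuous_exp.comp ((Complex.continuous_ofReal.comp continuous_snd).mul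
        continuous_const))
    have hc2 : Continuous fun p : ℂ × ℝ => (r:ℂ) * Complex.exp (p.2 * Complex.I) :=
      continuous_const.mul (Complex.continuous_exp.comp
        ((Complex.continuous_ofReal.comp continuous_snd).mul continuous_const))
    have hc3 : Continuous fun p : ℂ × ℝ => 1 - norm ((r:ℂ) * Complex.exp (p.2 * Complex.I)) ^ 2 :=
      continuous_const.sub ((continuous_norm.comp hc2).pow 2)
    have hc4 : Continuous fun p : ℂ × ℝ =>
        norm ((r:ℂ) * Complex.exp (p.2 * Complex.I) - p.1) ^ 2 :=
      (continuous_norm.comp (hc2.sub continuous_fst)).pow 2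
    exact (hc1.measurable).mul ((hc3.measurable).div (hc4.measurable))
  -- a.e. bound
  obtain ⟨C, hC⟩ := (isCompact_closedBall (0:ℂ) 1).exists_bound_of_continuousOn hf.continuousOn
  have hfb : ∀ θ : ℝ, |f (Complex.exp (θ * Complex.I))| ≤ max C 0 := by
    intro θ
    refine le_trans (le_trans (le_of_eq (Real.norm_eq_abs _).symm) (hC _ ?_)) (le_max_left _ _)
    simp [Metric.mem_closedBall, Complex.dist_eq, (abs_cexp θ).le]
  have haeprod : ∀ᵐ p ∂(μ.prod ν), norm p.1 = 1 := by
    rw [ae_iff]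
    have hset : {p : ℂ × ℝ | ¬norm p.1 = 1} = {z : ℂ | norm z ≠ 1} ×ˢ univ := by
      ext p; simp
    rw [hset, Measure.prod_prod, hμ1, zero_mul]
  have hgint : Integrable (Function.uncurry g) (μ.prod ν) := by
    apply Integrable.mono' (integrable_const (max C 0 * (1/(1-r)^2))) hgm
    filter_upwards [haeprod] with p hp
    rw [Real.norm_eq_abs, Function.uncurry, hgdef]
    simp only
    rw [abs_mul]
    have hP0 : 0 ≤ unitDiscPoissonKernel p.1 ((r:ℂ) * Complex.exp (p.2 * Complex.I)) := by
      apply poisson_nonneg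
      rw [abs_r_exp hr0.le]; exact hr1.le
    rw [_root_.abs_of_nonneg hP0]
    apply mul_le_mul (hfb p.2) _ hP0 (le_max_right _ _)
    apply poisson_le hp _ hr1
    rw [abs_r_exp hr0.le]
  constructor
  · have h := hgint.integral_prod_left
    have heq : ∀ ζ : ℂ, (∫ θ, Function.uncurry g (ζ, θ) ∂ν)
        = ∫ θ in (0:ℝ)..(2*Real.pi), g ζ θ := by
      intro ζ
      rw [intervalIntegral.integral_of_le h2π]
      rfl
    exact h.congr (ae_of_all _ fun ζ => heq ζ)
  · have h := MeasureTheory.integral_integral_swap hgint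
    have hl : ∫ ζ, (∫ θ in (0:ℝ)..(2*Real.pi), g ζ θ) ∂μ = ∫ ζ, (∫ θ, g ζ θ ∂ν) ∂μ := by
      apply MeasureTheory.integral_congr_ae
      apply ae_of_all
      intro ζ
      show (∫ θ in (0:ℝ)..(2*Real.pi), g ζ θ) = ∫ θ, g ζ θ ∂ν
      rw [intervalIntegral.integral_of_le h2π]
    rw [hl, h, intervalIntegral.integral_of_le h2π]
    apply MeasureTheory.integral_congr_ae
    apply ae_of_all
    intro θ
    simp only [hgdef]
    rw [MeasureTheory.integral_const_mul]

end S16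

set_option maxHeartbeats 1000000 in
/-- weak-star continuity in `t` of the Aleksandrov–Clark measures of a
continuous semigroup. -/
theorem statement16
    (φ : ℝ → ℂ → ℂ) (hφ : IsCtsSemigroup φ)
    (τ : ℂ) (hτ : ‖τ‖ = 1)
    (μtτ : ℝ → MeasureTheory.Measure ℂ)
    (hμ : ∀ t : ℝ, 0 ≤ t → IsClarkMeasure (φ t) τ (μtτ t)) :
    ∀ t₀ : ℝ, 0 ≤ t₀ → ∀ f : ℂ → ℝ, Continuous f →
      Filter.Tendsto (fun t : ℝ => ∫ ζ, f ζ ∂(μtτ t))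
        (𝓝[Set.Ici (0 : ℝ)] t₀) (𝓝 (∫ ζ, f ζ ∂(μtτ t₀))) := by
  intro t₀ ht₀ f hf
  obtain ⟨hφmaps, -, -, hφcont⟩ := hφ
  have hπ : (0:ℝ) < Real.pi := Real.pi_pos
  have hzero : (0:ℂ) ∈ unitDisc := by simp [unitDisc]
  set m : ℝ → ℝ := fun t => ((τ + φ t 0) / (τ - φ t 0)).re with hmdef
  have hmass : ∀ t, 0 ≤ t → (μtτ t Set.univ).toReal = m t := fun t ht =>
    S16.clark_mass (hμ t ht)
  have hden : ∀ t z, 0 ≤ t → z ∈ unitDisc → τ - φ t z ≠ 0 := fun t z ht hz =>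
    S16.sub_ne hτ ((hφmaps t ht).2 hz)
  -- continuity in t of φ t z
  have hφz : ∀ z ∈ unitDisc, Tendsto (fun t => φ t z) (𝓝[Ici 0] t₀) (𝓝 (φ t₀ z)) := by
    intro z hz
    have h1 : ContinuousWithinAt (fun p : ℝ × ℂ => φ p.1 p.2) (Ici 0 ×ˢ unitDisc) (t₀, z) :=
      hφcont (t₀, z) ⟨ht₀, hz⟩
    have h2 : Tendsto (fun t : ℝ => ((t, z) : ℝ × ℂ)) (𝓝[Ici 0] t₀)
        (𝓝[Ici 0 ×ˢ unitDisc] (t₀, z)) := by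
      rw [tendsto_nhdsWithin_iff]
      constructor
      · exact ((continuous_id.prodMk continuous_const).tendsto t₀).mono_left nhdsWithin_le_nhds
      · filter_upwards [self_mem_nhdsWithin] with t ht using ⟨ht, hz⟩
    exact Filter.Tendsto.comp h1 h2
  -- continuity in t of the Herglotz values
  have hu : ∀ z ∈ unitDisc, Tendsto (fun t => ((τ + φ t z) / (τ - φ t z)).re) (𝓝[Ici 0] t₀)
      (𝓝 (((τ + φ t₀ z) / (τ - φ t₀ z)).re)) := by
    intro z hz
    have h1 := hφz z hz
    have h2 : Tendsto (fun t => (τ + φ t z) / (τ - φ t z)) (𝓝[Ici 0] t₀)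
        (𝓝 ((τ + φ t₀ z) / (τ - φ t₀ z))) :=
      ((tendsto_const_nhds.add h1).div (tendsto_const_nhds.sub h1) (hden t₀ z ht₀ hz))
    exact (Complex.continuous_re.tendsto _).comp h2
  have hmc : Tendsto m (𝓝[Ici 0] t₀) (𝓝 (m t₀)) := hu 0 hzero
  set M : ℝ := m t₀ + 1 with hMdef
  have hm0 : 0 ≤ m t₀ := by rw [← hmass t₀ ht₀]; exact ENNReal.toReal_nonneg
  have hM1 : 1 ≤ M := by simp only [hMdef]; linarith
  have hMev : ∀ᶠ t in 𝓝[Ici 0] t₀, m t ≤ M :=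
    (hmc.eventually_lt_const (by simp only [hMdef]; linarith)).mono fun t ht => ht.le
  -- bound for f on the circle
  obtain ⟨C, hC⟩ := (isCompact_closedBall (0:ℂ) 1).exists_bound_of_continuousOn hf.continuousOn
  set C' : ℝ := max C 0 with hC'def
  have hC'0 : 0 ≤ C' := le_max_right _ _
  have hC' : ∀ z : ℂ, norm z ≤ 1 → |f z| ≤ C' := by
    intro z hz
    refine le_trans (le_trans (le_of_eq (Real.norm_eq_abs _).symm) (hC z ?_)) (le_max_left _ _)
    simpa [Metric.mem_closedBall, Complex.dist_eq] using hz
  clear_value C' M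
  rw [Metric.tendsto_nhds]
  intro ε hε
  set ε' : ℝ := Real.pi * ε / (2 * M + 2) with hε'def
  have hε' : 0 < ε' := by
    rw [hε'def]
    apply div_pos (by positivity) (by linarith)
  obtain ⟨r, hr0, hr1, hAI⟩ := S16.approx_identity f hf hε'
  clear_value ε'
  have hrz : ∀ θ : ℝ, ((r:ℂ) * Complex.exp (θ * Complex.I)) ∈ unitDisc := by
    intro θ
    show norm _ < 1
    rw [S16.abs_r_exp hr0.le]
    exact hr1
  -- the approximating function B
  set B : ℝ → ℝ := fun t => ∫ θ in (0:ℝ)..(2*Real.pi),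
      f (Complex.exp (θ * Complex.I)) *
        ((τ + φ t ((r:ℂ) * Complex.exp (θ * Complex.I))) /
          (τ - φ t ((r:ℂ) * Complex.exp (θ * Complex.I)))).re with hBdef
  -- B is continuous at t₀ along the filter
  have hB : Tendsto B (𝓝[Ici 0] t₀) (𝓝 (B t₀)) := by
    apply intervalIntegral.tendsto_integral_filter_of_dominated_convergence
      (bound := fun _ => C' * (1/(1-r)^2 * M))
    · filter_upwards [self_mem_nhdsWithin] with t ht
      apply Continuous.aestronglyMeasurable
      have hc1 : Continuous (fun θ : ℝ => (r:ℂ) * Complex.exp (θ * Complex.I)) :=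
        continuous_const.mul (Complex.continuous_exp.comp
          (Complex.continuous_ofReal.mul continuous_const))
      have hc2 : Continuous (fun θ : ℝ => φ t ((r:ℂ) * Complex.exp (θ * Complex.I))) :=
        (hφmaps t ht).1.continuousOn.comp_continuous hc1 (fun θ => hrz θ)
      have hc3 : Continuous (fun θ : ℝ =>
          (τ + φ t ((r:ℂ) * Complex.exp (θ * Complex.I))) /
            (τ - φ t ((r:ℂ) * Complex.exp (θ * Complex.I)))) :=
        (continuous_const.add hc2).div (continuous_const.sub hc2)
          (fun θ => hden t _ ht (hrz θ))
      exact (hf.comp (Complex.continuous_exp.comp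
        (Complex.continuous_ofReal.mul continuous_const))).mul
        (Complex.continuous_re.comp hc3)
    · filter_upwards [self_mem_nhdsWithin, hMev] with t ht hMt
      apply ae_of_all
      intro θ _hθ
      rw [Real.norm_eq_abs, abs_mul]
      have hz := hrz θ
      have habs : norm ((r:ℂ) * Complex.exp (θ * Complex.I)) = r := S16.abs_r_exp hr0.le θ
      -- the Herglotz value equals the Poisson integral
      haveI := (hμ t ht).1
      have heq := (hμ t ht).2.2 _ hz
      have hPb : |((τ + φ t ((r:ℂ) * Complex.exp (θ * Complex.I))) /
          (τ - φ t ((r:ℂ) * Complex.exp (θ * Complex.I)))).re| ≤ 1/(1-r)^2 * M := by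
        rw [heq]
        have hb := MeasureTheory.norm_integral_le_of_norm_le_const
          (μ := μtτ t) (C := 1/(1-r)^2)
          (f := fun ζ => unitDiscPoissonKernel ζ ((r:ℂ) * Complex.exp (θ * Complex.I))) ?_
        · rw [Real.norm_eq_abs] at hb
          refine le_trans hb ?_
          rw [show (μtτ t).real univ = m t from hmass t ht]
          have h1r : (0:ℝ) < 1/(1-r)^2 :=
            one_div_pos.2 (pow_pos (by linarith : (0:ℝ) < 1 - r) 2)
          have hmt0 : 0 ≤ m t := by rw [← hmass t ht]; exact ENNReal.toReal_nonneg
          calc 1/(1-r)^2 * m t ≤ 1/(1-r)^2 * M := by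
                apply mul_le_mul_of_nonneg_left hMt h1r.le
            _ = 1/(1-r)^2 * M := rfl
        · filter_upwards [S16.ae_circle (hμ t ht).2.1] with ζ hζ
          rw [Real.norm_eq_abs, _root_.abs_of_nonneg (S16.poisson_nonneg (by rw [habs]; exact hr1.le))]
          exact S16.poisson_le hζ (le_of_eq habs) hr1
      exact mul_le_mul (hC' _ (S16.abs_cexp θ).le) hPb (abs_nonneg _) hC'0
    · exact intervalIntegrable_const
    · apply ae_of_all
      intro θ _hθ
      exact (hu _ (hrz θ)).const_mul _
  -- eventual bound : |2π ∫f dμ_t - B t| ≤ ε' * M  for t ≥ 0 with m t ≤ M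
  have hkey : ∀ t : ℝ, 0 ≤ t → m t ≤ M →
      |2 * Real.pi * (∫ ζ, f ζ ∂(μtτ t)) - B t| ≤ ε' * M := by
    intro t ht hMt
    haveI := (hμ t ht).1
    obtain ⟨hQint, hQeq⟩ := S16.fubini_step (μtτ t) (hμ t ht).2.1 f hf hr0 hr1
    set Q : ℂ → ℝ := fun ζ => ∫ θ in (0:ℝ)..(2*Real.pi),
        f (Complex.exp (θ * Complex.I)) * unitDiscPoissonKernel ζ ((r:ℂ) * Complex.exp (θ * Complex.I))
      with hQdef
    have hQB : ∫ ζ, Q ζ ∂(μtτ t) = B t := by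
      rw [hQeq, hBdef]
      apply intervalIntegral.integral_congr
      intro θ _
      simp only
      rw [← (hμ t ht).2.2 _ (hrz θ)]
    have hfint : Integrable f (μtτ t) :=
      S16.integrable_on_circle (hμ t ht).2.1 hf.aestronglyMeasurable
        (fun ζ hζ => hC' ζ hζ.le)
    have hdiff : 2 * Real.pi * (∫ ζ, f ζ ∂(μtτ t)) - B t
        = ∫ ζ, (2 * Real.pi * f ζ - Q ζ) ∂(μtτ t) := by
      rw [MeasureTheory.integral_sub (hfint.const_mul _) hQint,
        MeasureTheory.integral_const_mul, hQB]
    rw [hdiff]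
    have hb := MeasureTheory.norm_integral_le_of_norm_le_const
      (μ := μtτ t) (C := ε') (f := fun ζ => 2 * Real.pi * f ζ - Q ζ) ?_
    · rw [Real.norm_eq_abs] at hb
      refine le_trans hb ?_
      rw [show (μtτ t).real univ = m t from hmass t ht]
      exact mul_le_mul_of_nonneg_left hMt hε'.le
    · filter_upwards [S16.ae_circle (hμ t ht).2.1] with ζ hζ
      rw [Real.norm_eq_abs, abs_sub_comm]
      exact hAI ζ hζ
  -- conclude
  have hBev : ∀ᶠ t in 𝓝[Ici 0] t₀, |B t - B t₀| < ε' := by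
    have := Metric.tendsto_nhds.1 hB ε' hε'
    filter_upwards [this] with t ht
    rwa [Real.dist_eq] at ht
  have ht₀key := hkey t₀ ht₀ (by simp only [hMdef]; linarith)
  filter_upwards [self_mem_nhdsWithin, hMev, hBev] with t ht hMt hBt
  rw [Real.dist_eq]
  have htkey := hkey t ht hMt
  set At := ∫ ζ, f ζ ∂(μtτ t)
  set At₀ := ∫ ζ, f ζ ∂(μtτ t₀)
  have h2 : |2 * Real.pi * At - 2 * Real.pi * At₀| ≤ 2 * (ε' * M) + ε' := by
    have h3 : 2 * Real.pi * At - 2 * Real.pi * At₀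
        = (2 * Real.pi * At - B t) + (B t - B t₀) + (B t₀ - 2 * Real.pi * At₀) := by ring
    rw [h3]
    have h4 := abs_add_le (2 * Real.pi * At - B t + (B t - B t₀)) (B t₀ - 2 * Real.pi * At₀)
    have h5 := abs_add_le (2 * Real.pi * At - B t) (B t - B t₀)
    have h6 : |B t₀ - 2 * Real.pi * At₀| = |2 * Real.pi * At₀ - B t₀| := abs_sub_comm _ _
    linarith [htkey, hBt, h6 ▸ ht₀key]
  have h7 : |2 * Real.pi * At - 2 * Real.pi * At₀| = 2 * Real.pi * |At - At₀| := by
    rw [show 2 * Real.pi * At - 2 * Real.pi * At₀ = 2 * Real.pi * (At - At₀) by ring,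
      abs_mul, _root_.abs_of_nonneg (by positivity : (0:ℝ) ≤ 2 * Real.pi)]
  rw [h7] at h2
  -- 2π |At - At₀| ≤ 2 ε' M + ε' = ε'(2M+1) = π ε (2M+1)/(2M+2) < 2π ε
  have h8 : 2 * (ε' * M) + ε' < 2 * Real.pi * ε := by
    have h9 : ε' * (2*M + 2) = Real.pi * ε := by
      rw [hε'def]
      field_simp
    nlinarith [h9, hε', hM1, mul_pos hε' (lt_of_lt_of_le one_pos hM1)]
  nlinarith [h2, h8, hπ]
end
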